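/- For every p×n real matrix β there exist an n×n real matrix W and a p×p real symmetric matrix θ such that: Wᵀ = W, W·W = W, tr(W) = rank(β), β·W = β, tr(θ) = ‖β‖_F², and the (p+n)×(p+n) block matrix [[θ, β],[βᵀ, W]] is positive semidefinite. (Hence the matrix-perspective semidefinite relaxation (minimizing (1/2m)‖Y − Xβ‖_F² + (1/2γ)tr(θ) + μ·tr(W) over W ⪯ I and [[θ, β],[βᵀ, W]] ⪰ 0) is a valid relaxation of Frobenius-regularized rank-penalized reduced rank regression: its optimal value is at most that of the original problem.) -/

import Mathlib

open Matrix

/-!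
Take `W` to be the orthogonal projection onto the row space of `β`, i.e. onto the range of the
Hermitian matrix `βᴴβ`: diagonalising `βᴴβ`, it is the indicator of the nonzero eigenvalues, so
its trace is `rank (βᴴβ) = rank β`. Then `β W = β`, and with `θ = β βᴴ` the block matrix is the
Gram matrix `[β; W] [β; W]ᴴ`, hence positive semidefinite, while `tr θ = ‖β‖_F²`.
-/

namespace Matrix

open Unitary
open scoped ComplexOrder

variable {𝕜 m n : Type*} [RCLike 𝕜] [Fintype m] [Fintype n]

theorem posSemidef_fromBlocks_mul_conjTranspose_self {B : Matrix m n 𝕜} {P : Matrix n n 𝕜}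
    (hP : P.IsHermitian) (hPP : P * P = P) (hBP : B * P = B) :
    (fromBlocks (B * Bᴴ) B Bᴴ P).PosSemidef := by
  have hPB : P * Bᴴ = Bᴴ := by rw [← hP.eq, ← conjTranspose_mul, hBP]
  have hGram : fromBlocks (B * Bᴴ) B Bᴴ P = fromRows B P * (fromRows B P)ᴴ := by
    rw [conjTranspose_fromRows_eq_fromCols_conjTranspose, fromRows_mul_fromCols, hP.eq, hBP,
      hPP, hPB]
  rw [hGram]
  exact posSemidef_self_mul_conjTranspose _

variable [DecidableEq n]

theorem mul_eq_self_of_conjTranspose_mul_self_mul_eq {B : Matrix m n 𝕜} {P : Matrix n n 𝕜}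
    (h : Bᴴ * B * P = Bᴴ * B) : B * P = B := by
  have hker : Bᴴ * B * (1 - P) = 0 := by rw [mul_sub, h, mul_one, sub_self]
  rw [conjTranspose_mul_self_mul_eq_zero, Matrix.mul_sub, Matrix.mul_one, sub_eq_zero] at hker
  exact hker.symm

theorem trace_conjStarAlgAut (U : unitaryGroup n 𝕜) (X : Matrix n n 𝕜) :
    (conjStarAlgAut 𝕜 _ U X).trace = X.trace := by
  rw [conjStarAlgAut_apply, trace_mul_cycle, coe_star_mul_self, one_mul]

namespace IsHermitian

variable {A : Matrix n n 𝕜} (hA : A.IsHermitian)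

noncomputable def rangeProj : Matrix n n 𝕜 :=
  conjStarAlgAut 𝕜 _ hA.eigenvectorUnitary
    (diagonal fun i => if hA.eigenvalues i = 0 then 0 else 1)

theorem rangeProj_isHermitian : hA.rangeProj.IsHermitian := by
  rw [rangeProj, IsHermitian, ← star_eq_conjTranspose, ← map_star, star_eq_conjTranspose,
    diagonal_conjTranspose]
  congr 3
  ext i
  by_cases h : hA.eigenvalues i = 0 <;> simp [h]

theorem rangeProj_mul_self : hA.rangeProj * hA.rangeProj = hA.rangeProj := by
  rw [rangeProj, ← map_mul, diagonal_mul_diagonal]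
  congr 3
  ext i
  split_ifs <;> simp

theorem mul_rangeProj : A * hA.rangeProj = A := by
  set D : Matrix n n 𝕜 := diagonal (RCLike.ofReal ∘ hA.eigenvalues)
  have hspec : A = conjStarAlgAut 𝕜 _ hA.eigenvectorUnitary D := hA.spectral_theorem
  have hD : D * diagonal (fun i => if hA.eigenvalues i = 0 then 0 else 1) = D := by
    rw [diagonal_mul_diagonal]
    congr 1
    ext i
    by_cases h : hA.eigenvalues i = 0 <;> simp [h]
  calc A * hA.rangeProj = conjStarAlgAut 𝕜 _ hA.eigenvectorUnitary D * hA.rangeProj := by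
        rw [← hspec]
    _ = A := by rw [rangeProj, ← map_mul, hD, ← hspec]

theorem trace_rangeProj : hA.rangeProj.trace = A.rank := by
  rw [rangeProj, trace_conjStarAlgAut, trace_diagonal, hA.rank_eq_card_non_zero_eigs,
    Fintype.card_subtype, Finset.card_filter]
  push_cast
  congr 1
  ext i
  by_cases h : hA.eigenvalues i = 0 <;> simp [h]

end IsHermitian

end Matrix

/-- For every `p×n` real matrix `β` there is an orthogonal projection `W` with trace equal
to `rank(β)`, `β·W = β`, and a symmetric `θ` with `tr(θ) = ‖β‖_F²` such that the block
matrix `[[θ, β],[βᵀ, W]]` is positive semidefinite: validity of the matrix-perspective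
relaxation of reduced rank regression. -/
theorem stmt_14 (p n : ℕ) (β : Matrix (Fin p) (Fin n) ℝ) :
    ∃ (W : Matrix (Fin n) (Fin n) ℝ) (θ : Matrix (Fin p) (Fin p) ℝ),
      Wᵀ = W ∧ W * W = W ∧ W.trace = (β.rank : ℝ) ∧ β * W = β ∧
      θᵀ = θ ∧ θ.trace = ∑ i, ∑ j, (β i j) ^ 2 ∧
      (Matrix.fromBlocks θ β βᵀ W).PosSemidef := by
  simp only [← conjTranspose_eq_transpose_of_trivial]
  have hG : (βᴴ * β).IsHermitian := isHermitian_conjTranspose_mul_self β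
  have hβW : β * hG.rangeProj = β :=
    mul_eq_self_of_conjTranspose_mul_self_mul_eq hG.mul_rangeProj
  refine ⟨hG.rangeProj, β * βᴴ, hG.rangeProj_isHermitian, hG.rangeProj_mul_self, ?_, hβW,
    isHermitian_mul_conjTranspose_self β, ?_,
    posSemidef_fromBlocks_mul_conjTranspose_self hG.rangeProj_isHermitian
      hG.rangeProj_mul_self hβW⟩
  · rw [hG.trace_rangeProj, rank_conjTranspose_mul_self]
  · simp [trace, mul_apply, sq]
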